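/- arXiv:2201.10997 — 4 statements merged into one kernel-verified Lean document; each statement's English description precedes it below -/
import Mathlib

section
/- Let n = 2m be even, let f : 𝔽₂ⁿ → 𝔽₂ be a bent function, and let c ≥ 1 be an integer. Then f is an affine extractor for dimension m + c with bias at most 2^{−c}. In particular, f is an affine disperser for dimension m + 1. -/
/-!
Write `χ(a) = (-1)^a` and `f̂(α) = ∑ₓ χ(f x + ⟨α, x⟩)`. Parseval gives `∑_α f̂(α)² = 2^{2n}`,
so a bent `f` on `𝔽₂^{2m}` has `|f̂(α)| = 2^m` for every `α`. Expanding the indicator of the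
coset `V + b` in the characters `χ⟨α, ·⟩` with `α ∈ V^⊥` shows that `∑_{x ∈ V + b} χ(f x)` is
an average of the `± f̂(α)`, hence at most `2^m` in absolute value; dividing by
`|V + b| ≥ 2^{m+c}` bounds the bias by `2^{-c}`. A function constant on the coset would have
bias `1 > 1/2`.
-/

open scoped Classical

/-- The bias of a Boolean function `f` restricted to a (nonempty) subset `S` of its
finite domain: `|(1/|S|) ∑_{x ∈ S} (-1)^{f(x)}|`. -/
noncomputable def biasSet {E : Type*} [Fintype E] (f : E → ZMod 2) (S : Set E) : ℝ :=
  |∑ x ∈ S.toFinset, (-1 : ℝ) ^ (f x).val| / (S.toFinset.card : ℝ)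

/-- `f : 𝔽₂ⁿ → 𝔽₂` is bent if all its Fourier coefficients
`f̂(α) = ∑_x (-1)^{f(x) + ⟨α, x⟩}` have the same absolute value. -/
def IsBent {n : ℕ} (f : (Fin n → ZMod 2) → ZMod 2) : Prop :=
  ∀ α β : Fin n → ZMod 2,
    |∑ x : Fin n → ZMod 2, (-1 : ℝ) ^ (f x + ∑ i, α i * x i).val| =
    |∑ x : Fin n → ZMod 2, (-1 : ℝ) ^ (f x + ∑ i, β i * x i).val|

open Matrix

noncomputable def signChar : AddChar (ZMod 2) ℝ where
  toFun a := (-1) ^ a.val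
  map_zero_eq_one' := by simp
  map_add_eq_mul' a b := by
    rw [ZMod.val_add, ← neg_one_pow_eq_pow_mod_two, pow_add]

lemma signChar_apply (a : ZMod 2) : signChar a = (-1) ^ a.val := rfl

lemma abs_signChar (a : ZMod 2) : |signChar a| = 1 := by
  simp [signChar_apply]

lemma signChar_eq_one_iff {a : ZMod 2} : signChar a = 1 ↔ a = 0 := by
  obtain rfl | rfl : a = 0 ∨ a = 1 := by revert a; decide
  · exact iff_of_true (AddChar.map_zero_eq_one _) rfl
  · exact iff_of_false (by norm_num [signChar_apply, ZMod.val_one]) one_ne_zero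

lemma sum_signChar_comp_eq_ite {A : Type*} [AddCommGroup A] [Fintype A] (g : A →+ ZMod 2) :
    ∑ a, signChar (g a) = if g = 0 then (Fintype.card A : ℝ) else 0 := by
  have h := AddChar.sum_eq_ite (signChar.compAddMonoidHom g)
  simp only [AddChar.compAddMonoidHom_apply, AddChar.eq_zero_iff, signChar_eq_one_iff] at h
  exact h.trans (if_congr (by simp [DFunLike.ext_iff]) rfl rfl)

lemma neg_eq_self_zmod_two {ι : Type*} (x : ι → ZMod 2) : -x = x :=
  funext fun i => ZMod.neg_eq_self_mod_two (x i)

section Walsh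

variable {ι : Type*} [Fintype ι] [DecidableEq ι]

noncomputable def walshCoeff (f : (ι → ZMod 2) → ZMod 2) (α : ι → ZMod 2) : ℝ :=
  ∑ x, signChar (f x + α ⬝ᵥ x)

lemma sum_signChar_dotProduct (z : ι → ZMod 2) :
    ∑ α : ι → ZMod 2, signChar (α ⬝ᵥ z) = if z = 0 then (2 : ℝ) ^ Fintype.card ι else 0 := by
  refine (sum_signChar_comp_eq_ite (.mk' (· ⬝ᵥ z) fun α β => add_dotProduct α β z)).trans
    (if_congr ?_ (by simp) rfl)
  simp only [DFunLike.ext_iff, AddMonoidHom.mk'_apply, AddMonoidHom.zero_apply,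
    dotProduct_comm _ z, dotProduct_eq_zero_iff]

lemma sum_walshCoeff_sq (f : (ι → ZMod 2) → ZMod 2) :
    ∑ α, walshCoeff f α ^ 2 = (2 : ℝ) ^ Fintype.card ι * 2 ^ Fintype.card ι := by
  calc ∑ α, walshCoeff f α ^ 2
      = ∑ x, ∑ y, signChar (f x + f y) * ∑ α : ι → ZMod 2, signChar (α ⬝ᵥ (x + y)) := by
        simp_rw [walshCoeff, sq, Finset.sum_mul_sum, Finset.mul_sum]
        rw [Finset.sum_comm]
        refine Finset.sum_congr rfl fun x _ => ?_
        rw [Finset.sum_comm]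
        refine Finset.sum_congr rfl fun y _ => Finset.sum_congr rfl fun α _ => ?_
        rw [← AddChar.map_add_eq_mul, ← AddChar.map_add_eq_mul, dotProduct_add]
        ring_nf
    _ = ∑ x, signChar (f x + f x) * (2 : ℝ) ^ Fintype.card ι := by
        refine Finset.sum_congr rfl fun x _ => ?_
        simp_rw [sum_signChar_dotProduct, add_eq_zero_iff_eq_neg, neg_eq_self_zmod_two, mul_ite,
          mul_zero, Finset.sum_ite_eq, Finset.mem_univ, if_true]
    _ = (2 : ℝ) ^ Fintype.card ι * 2 ^ Fintype.card ι := by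
        simp [CharTwo.add_self_eq_zero]

end Walsh

lemma isBent_iff {n : ℕ} {f : (Fin n → ZMod 2) → ZMod 2} :
    IsBent f ↔ ∀ α β, |walshCoeff f α| = |walshCoeff f β| := Iff.rfl

lemma abs_walshCoeff_of_isBent {m : ℕ} {f : (Fin (2 * m) → ZMod 2) → ZMod 2} (hf : IsBent f)
    (α : Fin (2 * m) → ZMod 2) : |walshCoeff f α| = 2 ^ m := by
  have hsum : ∑ β, walshCoeff f β ^ 2 = (2 : ℝ) ^ (2 * m) * |walshCoeff f α| ^ 2 := by
    simp_rw [← sq_abs (walshCoeff f _), isBent_iff.mp hf _ α]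
    simp
  have hsq : |walshCoeff f α| ^ 2 = (2 ^ m) ^ 2 := by
    have := hsum.symm.trans (sum_walshCoeff_sq f)
    rw [Fintype.card_fin] at this
    rw [← pow_mul, mul_comm m 2]
    exact mul_left_cancel₀ (by positivity) this
  exact (pow_left_inj₀ (abs_nonneg _) (by positivity) two_ne_zero).mp hsq

lemma mem_image_add_right_iff {ι : Type*} (V : Set (ι → ZMod 2)) (b x : ι → ZMod 2) :
    x ∈ (· + b) '' V ↔ x + b ∈ V := by
  rw [Set.image_add_right, Set.mem_preimage, neg_eq_self_zmod_two]

lemma card_toFinset_image_add_right {K E : Type*} [Field K] [Fintype K] [AddCommGroup E]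
    [Module K E] [Fintype E] (V : Submodule K E) (b : E) [Fintype ((· + b) '' (V : Set E))] :
    ((· + b) '' (V : Set E)).toFinset.card = Fintype.card K ^ Module.finrank K V := by
  rw [Set.toFinset_card, Set.card_image_of_injective _ (add_left_injective b),
    ← Module.card_eq_pow_finrank]
  rfl

section DotAnnihilator

variable {ι : Type*} [Fintype ι] [DecidableEq ι]

def dotAnnihilator {K : Type*} [Field K] (V : Submodule K (ι → K)) : Submodule K (ι → K) :=
  V.dualAnnihilator.comap (dotProductEquiv K ι).toLinearMap

lemma forall_mem_dotAnnihilator_dotProduct_eq_zero_iff {K : Type*} [Field K]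
    (V : Submodule K (ι → K)) (z : ι → K) :
    (∀ α ∈ dotAnnihilator V, α ⬝ᵥ z = 0) ↔ z ∈ V := by
  rw [← Subspace.forall_mem_dualAnnihilator_apply_eq_zero_iff V z,
    (dotProductEquiv K ι).surjective.forall]
  rfl

lemma sum_signChar_dotAnnihilator (V : Submodule (ZMod 2) (ι → ZMod 2)) (z : ι → ZMod 2) :
    ∑ α : dotAnnihilator V, signChar ((α : ι → ZMod 2) ⬝ᵥ z) =
      if z ∈ V then (Fintype.card (dotAnnihilator V) : ℝ) else 0 := by
  refine (sum_signChar_comp_eq_ite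
    (.mk' (fun α : dotAnnihilator V => (α : ι → ZMod 2) ⬝ᵥ z)
      fun α β => add_dotProduct _ _ z)).trans (if_congr ?_ rfl rfl)
  simp only [DFunLike.ext_iff, AddMonoidHom.mk'_apply, AddMonoidHom.zero_apply, Subtype.forall,
    forall_mem_dotAnnihilator_dotProduct_eq_zero_iff]

lemma card_dotAnnihilator_mul_sum_coset (f : (ι → ZMod 2) → ZMod 2)
    (V : Submodule (ZMod 2) (ι → ZMod 2)) (b : ι → ZMod 2) :
    (Fintype.card (dotAnnihilator V) : ℝ) *
        ∑ x ∈ ((· + b) '' (V : Set (ι → ZMod 2))).toFinset, signChar (f x) =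
      ∑ α : dotAnnihilator V, signChar ((α : ι → ZMod 2) ⬝ᵥ b) * walshCoeff f α := by
  symm
  calc ∑ α : dotAnnihilator V, signChar ((α : ι → ZMod 2) ⬝ᵥ b) * walshCoeff f α
      = ∑ x, signChar (f x) * ∑ α : dotAnnihilator V, signChar ((α : ι → ZMod 2) ⬝ᵥ (x + b)) := by
        simp_rw [walshCoeff, Finset.mul_sum]
        rw [Finset.sum_comm]
        refine Finset.sum_congr rfl fun x _ => Finset.sum_congr rfl fun α _ => ?_
        rw [← AddChar.map_add_eq_mul, ← AddChar.map_add_eq_mul, dotProduct_add]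
        ring_nf
    _ = ∑ x, if x ∈ ((· + b) '' (V : Set (ι → ZMod 2))).toFinset then
          (Fintype.card (dotAnnihilator V) : ℝ) * signChar (f x) else 0 := by
        simp_rw [sum_signChar_dotAnnihilator, Set.mem_toFinset, mem_image_add_right_iff,
          SetLike.mem_coe, mul_ite, mul_zero, mul_comm]
    _ = _ := by
        rw [Finset.sum_ite_mem, Finset.univ_inter, Finset.mul_sum]

lemma abs_sum_coset_le (f : (ι → ZMod 2) → ZMod 2) (V : Submodule (ZMod 2) (ι → ZMod 2))
    (b : ι → ZMod 2) {B : ℝ} (hB : ∀ α, |walshCoeff f α| ≤ B) :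
    |∑ x ∈ ((· + b) '' (V : Set (ι → ZMod 2))).toFinset, signChar (f x)| ≤ B := by
  have hcard : (0 : ℝ) < Fintype.card (dotAnnihilator V) := by exact_mod_cast Fintype.card_pos
  refine le_of_mul_le_mul_left ?_ hcard
  calc (Fintype.card (dotAnnihilator V) : ℝ) *
        |∑ x ∈ ((· + b) '' (V : Set (ι → ZMod 2))).toFinset, signChar (f x)|
      = |∑ α : dotAnnihilator V, signChar ((α : ι → ZMod 2) ⬝ᵥ b) * walshCoeff f α| := by
        rw [← card_dotAnnihilator_mul_sum_coset, abs_mul, abs_of_pos hcard]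
    _ ≤ ∑ α : dotAnnihilator V, |walshCoeff f α| := by
        refine (Finset.abs_sum_le_sum_abs _ _).trans_eq (Finset.sum_congr rfl fun α _ => ?_)
        rw [abs_mul, abs_signChar, one_mul]
    _ ≤ Fintype.card (dotAnnihilator V) * B := by
        rw [← Finset.card_univ, ← nsmul_eq_mul, ← Finset.sum_const]
        exact Finset.sum_le_sum fun α _ => hB α

end DotAnnihilator

/-- `biasSet` is stated with the classical `Fintype S` instance; this form accepts any instance. -/
lemma biasSet_eq {E : Type*} [Fintype E] (f : E → ZMod 2) (S : Set E) [Fintype S] :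
    biasSet f S = |∑ x ∈ S.toFinset, signChar (f x)| / S.toFinset.card := by
  rw [biasSet]
  congr!

lemma exists_ne_of_biasSet_lt_one {E : Type*} [Fintype E] {f : E → ZMod 2} {S : Set E}
    (hS : S.Nonempty) (h : biasSet f S < 1) : ∃ x ∈ S, ∃ y ∈ S, f x ≠ f y := by
  by_contra! hconst
  obtain ⟨x₀, hx₀⟩ := hS
  have hcard : (0 : ℝ) < S.toFinset.card := by
    exact_mod_cast (Set.toFinset_nonempty.mpr ⟨x₀, hx₀⟩).card_pos
  have : biasSet f S = 1 := by
    rw [biasSet, Finset.sum_congr rfl fun x hx => by rw [hconst x (Set.mem_toFinset.mp hx) x₀ hx₀],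
      Finset.sum_const, nsmul_eq_mul, abs_mul, ← signChar_apply, abs_signChar, mul_one,
      abs_of_pos hcard, div_self hcard.ne']
  exact h.ne this

lemma biasSet_image_add_right_le_of_isBent {m c : ℕ} {f : (Fin (2 * m) → ZMod 2) → ZMod 2}
    (hf : IsBent f) (V : Submodule (ZMod 2) (Fin (2 * m) → ZMod 2)) (b : Fin (2 * m) → ZMod 2)
    (hV : m + c ≤ Module.finrank (ZMod 2) V) :
    biasSet f ((· + b) '' (V : Set (Fin (2 * m) → ZMod 2))) ≤ (2 : ℝ)⁻¹ ^ c := by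
  have hsum := abs_sum_coset_le f V b fun α => (abs_walshCoeff_of_isBent hf α).le
  rw [biasSet_eq, card_toFinset_image_add_right, ZMod.card, Nat.cast_pow, Nat.cast_ofNat]
  calc _ ≤ (2 : ℝ) ^ m / 2 ^ (m + c) :=
        div_le_div₀ (by positivity) hsum (by positivity) (pow_le_pow_right₀ one_le_two hV)
    _ = (2 : ℝ)⁻¹ ^ c := by
        rw [pow_add, inv_pow]
        field_simp

theorem bent_affine_extractor_general {m c : ℕ}
    (f : (Fin (2 * m) → ZMod 2) → ZMod 2) (hf : IsBent f) :
    (∀ (V : Submodule (ZMod 2) (Fin (2 * m) → ZMod 2)) (b : Fin (2 * m) → ZMod 2),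
      m + c ≤ Module.finrank (ZMod 2) V →
        biasSet f ((fun v => v + b) '' (V : Set (Fin (2 * m) → ZMod 2))) ≤ (2 : ℝ)⁻¹ ^ c) ∧
    (∀ (V : Submodule (ZMod 2) (Fin (2 * m) → ZMod 2)) (b : Fin (2 * m) → ZMod 2),
      m + 1 ≤ Module.finrank (ZMod 2) V →
        ∃ x ∈ (fun v => v + b) '' (V : Set (Fin (2 * m) → ZMod 2)),
          ∃ y ∈ (fun v => v + b) '' (V : Set (Fin (2 * m) → ZMod 2)), f x ≠ f y) := by
  refine ⟨biasSet_image_add_right_le_of_isBent hf, fun V b hV => ?_⟩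
  exact exists_ne_of_biasSet_lt_one ⟨b, 0, V.zero_mem, zero_add b⟩
    ((biasSet_image_add_right_le_of_isBent (c := 1) hf V b hV).trans_lt (by norm_num))

/-- Let `n = 2m` be even, `f : 𝔽₂ⁿ → 𝔽₂` a bent function, and `c ≥ 1` an integer.
Then `f` is an affine extractor for dimension `m + c` with bias at most `2^{-c}`;
in particular, `f` is an affine disperser for dimension `m + 1`. -/
theorem bent_affine_extractor {m c : ℕ} (hc : 1 ≤ c)
    (f : (Fin (2 * m) → ZMod 2) → ZMod 2) (hf : IsBent f) :
    (∀ (V : Submodule (ZMod 2) (Fin (2 * m) → ZMod 2)) (b : Fin (2 * m) → ZMod 2),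
      m + c ≤ Module.finrank (ZMod 2) V →
        biasSet f ((fun v => v + b) '' (V : Set (Fin (2 * m) → ZMod 2))) ≤ (2 : ℝ)⁻¹ ^ c) ∧
    (∀ (V : Submodule (ZMod 2) (Fin (2 * m) → ZMod 2)) (b : Fin (2 * m) → ZMod 2),
      m + 1 ≤ Module.finrank (ZMod 2) V →
        ∃ x ∈ (fun v => v + b) '' (V : Set (Fin (2 * m) → ZMod 2)),
          ∃ y ∈ (fun v => v + b) '' (V : Set (Fin (2 * m) → ZMod 2)), f x ≠ f y) :=
  bent_affine_extractor_general f hf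
end

section
/- Let k ≥ 1 and let a₀, a₁, a₂, a₃ ∈ 𝔽_{2^k} with a₀ ≠ 0. Define g : 𝔽_{2^k} × 𝔽_{2^k} → 𝔽₂ by g(x, y) = Tr(a₀·x·y + a₁·x + a₂·y + a₃). Then all Fourier coefficients of g have the same absolute value; that is, for all μ₁, μ₂ ∈ 𝔽_{2^k}, |Σ_{x,y∈𝔽_{2^k}} (−1)^{g(x,y) + Tr(μ₁·x + μ₂·y)}| = |Σ_{x,y∈𝔽_{2^k}} (−1)^{g(x,y)}|. -/
/-!
Summing over `y` first, a nontrivial additive character `ψ` of a finite field gives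
`∑ y, ψ ((a x + c) y) = |F|·[a x + c = 0]`, so only `x = -c/a` survives and
`∑ x, ∑ y, ψ (a x y + b x + c y + d) = |F| · ψ (d - b c / a)`. For the sign character
`z ↦ (-1)^Tr(z)` both sides of the theorem are therefore `|F|` times a sign: adding
`Tr(μ₁ x + μ₂ y)` only changes `b` and `c`.
-/

open Finset

theorem AddChar.sum_sum_apply_mul_mul_add {F R : Type*} [Field F] [Fintype F] [CommRing R]
    [IsDomain R] {ψ : AddChar F R} (hψ : ψ ≠ 1) (a b c d : F) (ha : a ≠ 0) :
    ∑ x, ∑ y, ψ (a * x * y + b * x + c * y + d) = Fintype.card F * ψ (d - b * c / a) := by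
  classical
  have hinner (x : F) : ∑ y, ψ (a * x * y + b * x + c * y + d)
      = if x = -c / a then Fintype.card F * ψ (b * x + d) else 0 := by
    have hsplit (y : F) :
        ψ (a * x * y + b * x + c * y + d) = ψ (y * (a * x + c)) * ψ (b * x + d) := by
      rw [← AddChar.map_add_eq_mul]
      ring_nf
    have hroot : a * x + c = 0 ↔ x = -c / a := by
      rw [eq_div_iff ha, eq_neg_iff_add_eq_zero, mul_comm x]
    simp only [hsplit, ← sum_mul, AddChar.sum_mulShift _ (.of_ne_one hψ), hroot,
      Nat.cast_ite, Nat.cast_zero, ite_mul, zero_mul]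
  rw [Fintype.sum_congr _ _ hinner, sum_ite_eq' _ _, if_pos (mem_univ _)]
  congr 2
  field_simp
  ring

noncomputable def traceSignChar (F : Type*) [Field F] [Algebra (ZMod 2) F] : AddChar F ℝ where
  toFun z := (-1) ^ (Algebra.trace (ZMod 2) F z).val
  map_zero_eq_one' := by simp
  map_add_eq_mul' z w := by
    rw [map_add, ZMod.val_add, ← pow_add, ← neg_one_pow_eq_pow_mod_two]

theorem traceSignChar_apply {F : Type*} [Field F] [Algebra (ZMod 2) F] (z : F) :
    traceSignChar F z = (-1) ^ (Algebra.trace (ZMod 2) F z).val := rfl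

theorem abs_traceSignChar {F : Type*} [Field F] [Algebra (ZMod 2) F] (z : F) :
    |traceSignChar F z| = 1 := by
  simp [traceSignChar_apply, abs_pow]

theorem traceSignChar_ne_one (F : Type*) [Field F] [Finite F] [Algebra (ZMod 2) F] :
    traceSignChar F ≠ 1 := by
  have : FiniteDimensional (ZMod 2) F := Module.Finite.of_finite
  obtain ⟨z, hz⟩ := Algebra.trace_surjective (ZMod 2) F 1
  refine AddChar.ne_one_iff.mpr ⟨z, ?_⟩
  rw [traceSignChar_apply, hz]
  norm_num [ZMod.val_one]

theorem trace_bent_general {F : Type*} [Field F] [Fintype F]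
    [Algebra (ZMod 2) F]
    (a0 a1 a2 a3 : F) (ha0 : a0 ≠ 0) (μ1 μ2 : F) :
    |∑ x : F, ∑ y : F,
        (-1 : ℝ) ^ (Algebra.trace (ZMod 2) F (a0 * x * y + a1 * x + a2 * y + a3)
          + Algebra.trace (ZMod 2) F (μ1 * x + μ2 * y)).val| =
    |∑ x : F, ∑ y : F,
        (-1 : ℝ) ^ (Algebra.trace (ZMod 2) F (a0 * x * y + a1 * x + a2 * y + a3)).val| := by
  have hshift (x y : F) :
      (-1 : ℝ) ^ (Algebra.trace (ZMod 2) F (a0 * x * y + a1 * x + a2 * y + a3)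
          + Algebra.trace (ZMod 2) F (μ1 * x + μ2 * y)).val
        = traceSignChar F (a0 * x * y + (a1 + μ1) * x + (a2 + μ2) * y + a3) := by
    rw [traceSignChar_apply, ← map_add]
    ring_nf
  simp only [hshift, ← traceSignChar_apply]
  have hψ := traceSignChar_ne_one F
  rw [AddChar.sum_sum_apply_mul_mul_add hψ _ _ _ _ ha0,
    AddChar.sum_sum_apply_mul_mul_add hψ _ _ _ _ ha0, abs_mul, abs_mul, abs_traceSignChar,
    abs_traceSignChar]

/-- Let `F = 𝔽_{2^k}` (with `k ≥ 1`) and `a₀, a₁, a₂, a₃ ∈ F` with `a₀ ≠ 0`.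
Define `g(x, y) = Tr(a₀·x·y + a₁·x + a₂·y + a₃)`, where `Tr : F → 𝔽₂` is the field
trace. Then all Fourier coefficients of `g` have the same absolute value: for all
`μ₁, μ₂ ∈ F`,
`|∑_{x,y} (-1)^{g(x,y) + Tr(μ₁·x + μ₂·y)}| = |∑_{x,y} (-1)^{g(x,y)}|`. -/
theorem trace_bent {k : ℕ} (hk : 1 ≤ k) {F : Type*} [Field F] [Fintype F]
    [Algebra (ZMod 2) F] (hF : Fintype.card F = 2 ^ k)
    (a0 a1 a2 a3 : F) (ha0 : a0 ≠ 0) (μ1 μ2 : F) :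
    |∑ x : F, ∑ y : F,
        (-1 : ℝ) ^ (Algebra.trace (ZMod 2) F (a0 * x * y + a1 * x + a2 * y + a3)
          + Algebra.trace (ZMod 2) F (μ1 * x + μ2 * y)).val| =
    |∑ x : F, ∑ y : F,
        (-1 : ℝ) ^ (Algebra.trace (ZMod 2) F (a0 * x * y + a1 * x + a2 * y + a3)).val| :=
  trace_bent_general a0 a1 a2 a3 ha0 μ1 μ2
end

section
/- Let k ≥ 1 and define f : 𝔽_{2^k} × 𝔽_{2^k} × 𝔽_{2^k} → 𝔽₂ by f(x, y, z) = Tr(x·y·z). Then f is a directional affine disperser for dimension 2k + 1; that is, for every nonzero a ∈ 𝔽_{2^k}³, the directional derivative D_a f is non-constant on every affine subspace of 𝔽_{2^k}³ of dimension at least 2k + 1. -/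
open Module

/-! For fixed `a`, `D_a f` is a quadratic function whose polar form is the bilinear form
`B_a(u, v) = Tr(Σ_σ a_σ₁ u_σ₂ v_σ₃)`, the third finite difference of `Tr(xyz)`. If `D_a f`
is constant on `b + V`, these third differences vanish on `V`, so `V` is totally isotropic
for `B_a` and `2 dim V ≤ dim F³ + dim ker B_a = 3k + dim ker B_a`. As the trace form is
nondegenerate, the radical of `B_a` is cut out by the `F`-linear equations
`a_i v_j + a_j v_i = 0`; for `a ≠ 0` it projects injectively to a coordinate `i` with
`a_i ≠ 0`, so it has dimension at most `k`, and `dim V ≤ 2k`. -/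

theorem LinearMap.BilinForm.two_mul_finrank_le_of_le_orthogonal {K V : Type*} [Field K]
    [AddCommGroup V] [Module K V] [FiniteDimensional K V] {B : LinearMap.BilinForm K V}
    {W : Submodule K V} (hW : W ≤ B.orthogonal W) :
    2 * finrank K W ≤ finrank K V + finrank K (LinearMap.ker B) := by
  have hsum := B.finrank_add_finrank_orthogonal' W
  have hW_le := Submodule.finrank_mono hW
  have hinf_le := Submodule.finrank_mono (inf_le_right : W ⊓ LinearMap.ker B ≤ LinearMap.ker B)
  omega

section TracePolarForm

variable (K : Type*) {L : Type*} [Field K] [Field L] [Algebra K L]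

noncomputable def tracePolarForm (a : L × L × L) :
    LinearMap.BilinForm K (L × L × L) :=
  LinearMap.mk₂ K
    (fun u v => Algebra.trace K L
      (a.1 * (u.2.1 * v.2.2 + u.2.2 * v.2.1) + a.2.1 * (u.1 * v.2.2 + u.2.2 * v.1)
        + a.2.2 * (u.1 * v.2.1 + u.2.1 * v.1)))
    (fun _ _ _ => by
      rw [← map_add]; congr 1; simp only [Prod.fst_add, Prod.snd_add]; ring)
    (fun _ _ _ => by
      rw [← map_smul]; congr 1
      simp only [Prod.smul_fst, Prod.smul_snd]; simp only [Algebra.smul_def]; ring)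
    (fun _ _ _ => by
      rw [← map_add]; congr 1; simp only [Prod.fst_add, Prod.snd_add]; ring)
    (fun _ _ _ => by
      rw [← map_smul]; congr 1
      simp only [Prod.smul_fst, Prod.smul_snd]; simp only [Algebra.smul_def]; ring)

variable {K}

theorem tracePolarForm_apply (a u v : L × L × L) :
    tracePolarForm K a u v = Algebra.trace K L
      (a.1 * (u.2.1 * v.2.2 + u.2.2 * v.2.1) + a.2.1 * (u.1 * v.2.2 + u.2.2 * v.1)
        + a.2.2 * (u.1 * v.2.1 + u.2.1 * v.1)) := rfl

theorem tracePolarForm_eq_thirdDifference (f : L × L × L → K)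
    (hf : ∀ x y z : L, f (x, y, z) = Algebra.trace K L (x * y * z)) (a b u v : L × L × L) :
    tracePolarForm K a u v =
      (f (u + v + b + a) - f (u + v + b)) - (f (u + b + a) - f (u + b))
        - (f (v + b + a) - f (v + b)) + (f (b + a) - f b) := by
  obtain ⟨a₁, a₂, a₃⟩ := a
  obtain ⟨b₁, b₂, b₃⟩ := b
  obtain ⟨u₁, u₂, u₃⟩ := u
  obtain ⟨v₁, v₂, v₃⟩ := v
  simp only [tracePolarForm_apply, Prod.mk_add_mk, hf, ← map_sub, ← map_add]
  congr 1
  ring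

theorem le_orthogonal_tracePolarForm (f : L × L × L → K)
    (hf : ∀ x y z : L, f (x, y, z) = Algebra.trace K L (x * y * z)) {a b : L × L × L}
    {V : Submodule K (L × L × L)}
    (hconst : ∀ v ∈ V, f (v + b + a) - f (v + b) = f (b + a) - f b) :
    V ≤ (tracePolarForm K a).orthogonal V := by
  intro v hv u hu
  rw [tracePolarForm_eq_thirdDifference f hf a b,
    hconst _ (V.add_mem hu hv), hconst u hu, hconst v hv]
  ring

variable [FiniteDimensional K L] [Algebra.IsSeparable K L]

theorem mem_ker_tracePolarForm_iff {a v : L × L × L} :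
    v ∈ LinearMap.ker (tracePolarForm K a) ↔
      a.2.1 * v.2.2 + a.2.2 * v.2.1 = 0 ∧ a.1 * v.2.2 + a.2.2 * v.1 = 0 ∧
        a.1 * v.2.1 + a.2.1 * v.1 = 0 := by
  have eq_zero_of_trace_mul_eq_zero {c : L} (hc : ∀ x : L, Algebra.trace K L (x * c) = 0) :
      c = 0 :=
    (traceForm_nondegenerate K L).1 c fun x => by
      rw [Algebra.traceForm_apply, mul_comm]; exact hc x
  obtain ⟨a₁, a₂, a₃⟩ := a
  obtain ⟨v₁, v₂, v₃⟩ := v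
  rw [LinearMap.mem_ker]
  constructor
  · intro h
    refine ⟨eq_zero_of_trace_mul_eq_zero fun x => ?_,
      eq_zero_of_trace_mul_eq_zero fun x => ?_, eq_zero_of_trace_mul_eq_zero fun x => ?_⟩ <;>
    [have hx := LinearMap.congr_fun h (x, 0, 0); have hx := LinearMap.congr_fun h (0, x, 0);
      have hx := LinearMap.congr_fun h (0, 0, x)] <;>
    · rw [tracePolarForm_apply, LinearMap.zero_apply] at hx
      convert hx using 2
      ring
  · rintro ⟨h₁, h₂, h₃⟩
    refine LinearMap.ext fun u => ?_
    rw [tracePolarForm_apply, LinearMap.zero_apply, ← map_zero (Algebra.trace K L)]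
    congr 1
    linear_combination u.1 * h₁ + u.2.1 * h₂ + u.2.2 * h₃

theorem finrank_ker_tracePolarForm_le {a : L × L × L} (ha : a ≠ 0) :
    finrank K (LinearMap.ker (tracePolarForm K a)) ≤ finrank K L := by
  suffices ∃ π : L × L × L →ₗ[K] L,
      Disjoint (LinearMap.ker (tracePolarForm K a)) (LinearMap.ker π) by
    obtain ⟨π, hπ⟩ := this
    exact LinearMap.finrank_le_finrank_of_injective (LinearMap.injective_domRestrict_iff.mpr hπ)
  obtain ⟨a₁, a₂, a₃⟩ := a
  have ha' : a₁ ≠ 0 ∨ a₂ ≠ 0 ∨ a₃ ≠ 0 := by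
    by_contra! h
    exact ha (by simp [h])
  rcases ha' with h | h | h
  · refine ⟨LinearMap.fst K L (L × L), Submodule.disjoint_def.mpr ?_⟩
    rintro ⟨v₁, v₂, v₃⟩ hv (hv₁ : v₁ = 0)
    obtain ⟨-, h₂, h₃⟩ := mem_ker_tracePolarForm_iff.mp hv
    simp_all
  · refine ⟨(LinearMap.fst K L L).comp (LinearMap.snd K L (L × L)),
      Submodule.disjoint_def.mpr ?_⟩
    rintro ⟨v₁, v₂, v₃⟩ hv (hv₂ : v₂ = 0)
    obtain ⟨h₁, -, h₃⟩ := mem_ker_tracePolarForm_iff.mp hv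
    simp_all
  · refine ⟨(LinearMap.snd K L L).comp (LinearMap.snd K L (L × L)),
      Submodule.disjoint_def.mpr ?_⟩
    rintro ⟨v₁, v₂, v₃⟩ hv (hv₃ : v₃ = 0)
    obtain ⟨h₁, h₂, -⟩ := mem_ker_tracePolarForm_iff.mp hv
    simp_all

end TracePolarForm

theorem trace_directional_affine_disperser_general {k : ℕ}
    {F : Type*} [Field F] [Fintype F] [Algebra (ZMod 2) F]
    (hF : Fintype.card F = 2 ^ k)
    (f : F × F × F → ZMod 2)
    (hf : ∀ x y z : F,
      f (x, y, z) = Algebra.trace (ZMod 2) F (x * y * z)) :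
    ∀ a : F × F × F, a ≠ 0 →
      ∀ (V : Submodule (ZMod 2) (F × F × F)) (b : F × F × F),
        2 * k + 1 ≤ Module.finrank (ZMod 2) V →
          ∃ x ∈ (fun v => v + b) '' (V : Set (F × F × F)),
            ∃ y ∈ (fun v => v + b) '' (V : Set (F × F × F)),
              f (x + a) + f x ≠ f (y + a) + f y := by
  intro a ha V b hV
  have : FiniteDimensional (ZMod 2) F := Module.Finite.of_finite
  have hkF : finrank (ZMod 2) F = k := by
    have hcard := card_eq_pow_finrank (K := ZMod 2) (V := F)
    rw [ZMod.card, hF] at hcard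
    exact Nat.pow_right_injective le_rfl hcard.symm
  by_contra! hD
  have hconst : ∀ v ∈ V, f (v + b + a) - f (v + b) = f (b + a) - f b := fun v hv => by
    simpa only [CharTwo.sub_eq_add, zero_add] using
      hD _ ⟨v, hv, rfl⟩ _ ⟨0, V.zero_mem, zero_add b⟩
  have hV₂ := LinearMap.BilinForm.two_mul_finrank_le_of_le_orthogonal
    (le_orthogonal_tracePolarForm f hf hconst)
  have hker := finrank_ker_tracePolarForm_le (K := ZMod 2) ha
  rw [finrank_prod, finrank_prod, hkF] at hV₂
  omega

/-- Let `F = 𝔽_{2^k}` (with `k ≥ 1`) and `f(x, y, z) = Tr(x·y·z)` on `F³`, viewed as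
an `𝔽₂`-vector space of dimension `3k`. Then `f` is a directional affine disperser
for dimension `2k + 1`: for every nonzero `a ∈ F³`, the directional derivative
`D_a f(w) = f(w + a) + f(w)` is non-constant on every affine subspace `S = V + b` of
dimension at least `2k + 1`. -/
theorem trace_directional_affine_disperser {k : ℕ} (hk : 1 ≤ k)
    {F : Type*} [Field F] [Fintype F] [Algebra (ZMod 2) F]
    (hF : Fintype.card F = 2 ^ k)
    (f : F × F × F → ZMod 2)
    (hf : ∀ x y z : F,
      f (x, y, z) = Algebra.trace (ZMod 2) F (x * y * z)) :
    ∀ a : F × F × F, a ≠ 0 →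
      ∀ (V : Submodule (ZMod 2) (F × F × F)) (b : F × F × F),
        2 * k + 1 ≤ Module.finrank (ZMod 2) V →
          ∃ x ∈ (fun v => v + b) '' (V : Set (F × F × F)),
            ∃ y ∈ (fun v => v + b) '' (V : Set (F × F × F)),
              f (x + a) + f x ≠ f (y + a) + f y :=
  trace_directional_affine_disperser_general hF f hf
end

section
/- Let f : 𝔽₂ⁿ → 𝔽₂, let V ⊆ 𝔽₂ⁿ be a linear subspace, let ε ∈ [0,1], and let a₁, …, a_k ∈ 𝔽₂ⁿ (k ≥ 1) be distinct vectors such that for all 1 ≤ i < j ≤ k, |Σ_{x∈V} (−1)^{f(x+a_i)} · (−1)^{f(x+a_j)}| ≤ ε·|V|. For x ∈ V, let m_x denote the minimum of |{i ∈ [k] : f(x+a_i) = 0}| and |{i ∈ [k] : f(x+a_i) = 1}|. Then Σ_{x∈V} m_x ≥ (k·|V|/2)·(1 − √(ε + 1/k)). -/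
open scoped Classical

/-- Let `f : 𝔽₂ⁿ → 𝔽₂`, `V ⊆ 𝔽₂ⁿ` a linear subspace, `ε ∈ [0,1]`, and
`a₁, …, a_k ∈ 𝔽₂ⁿ` (`k ≥ 1`) distinct vectors with
`|∑_{x∈V} (-1)^{f(x+aᵢ)}·(-1)^{f(x+aⱼ)}| ≤ ε·|V|` for all `i < j`. For `x ∈ V`, let
`m_x` be the minimum of `|{i : f(x+aᵢ) = 0}|` and `|{i : f(x+aᵢ) = 1}|`. Then
`∑_{x∈V} m_x ≥ (k·|V|/2)·(1 − √(ε + 1/k))`. -/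
theorem min_side_sum_lower_bound {n k : ℕ} (hk : 1 ≤ k)
    (f : (Fin n → ZMod 2) → ZMod 2)
    (V : Submodule (ZMod 2) (Fin n → ZMod 2))
    {ε : ℝ} (hε0 : 0 ≤ ε) (hε1 : ε ≤ 1)
    (a : Fin k → (Fin n → ZMod 2)) (ha : Function.Injective a)
    (hcorr : ∀ i j : Fin k, i < j →
      |∑ x : V, (-1 : ℝ) ^ (f ((x : Fin n → ZMod 2) + a i)).val
          * (-1 : ℝ) ^ (f ((x : Fin n → ZMod 2) + a j)).val|
        ≤ ε * (Fintype.card V : ℝ)) :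
    ∑ x : V,
        (min ((Finset.univ.filter
                (fun i : Fin k => f ((x : Fin n → ZMod 2) + a i) = 0)).card)
             ((Finset.univ.filter
                (fun i : Fin k => f ((x : Fin n → ZMod 2) + a i) = 1)).card) : ℝ)
      ≥ (k : ℝ) * (Fintype.card V : ℝ) / 2
          * (1 - Real.sqrt (ε + 1 / (k : ℝ))) := by
  set c : ℝ := (Fintype.card V : ℝ) with hc_def
  have hc0 : (0:ℝ) ≤ c := Nat.cast_nonneg _
  have hk1 : (1:ℝ) ≤ (k:ℝ) := by exact_mod_cast hk
  have hkpos : (0:ℝ) < (k:ℝ) := by linarith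
  set e : Fin k → V → ℝ :=
    fun i x => (-1 : ℝ) ^ (f ((x : Fin n → ZMod 2) + a i)).val with he_def
  set S : V → ℝ := fun x => ∑ i : Fin k, e i x with hS_def
  -- pointwise value of e
  have he01 : ∀ (i : Fin k) (x : V),
      (f ((x : Fin n → ZMod 2) + a i) = 0 ∧ e i x = 1) ∨
      (f ((x : Fin n → ZMod 2) + a i) = 1 ∧ e i x = -1) := by
    intro i x
    have hv : f ((x : Fin n → ZMod 2) + a i) = 0 ∨
        f ((x : Fin n → ZMod 2) + a i) = 1 := by
      generalize f ((x : Fin n → ZMod 2) + a i) = v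
      revert v
      decide
    rcases hv with h | h
    · left; refine ⟨h, ?_⟩; simp [he_def, h]
    · right; refine ⟨h, ?_⟩; simp [he_def, h, ZMod.val_one]
  -- pointwise: min = (k - |S x|)/2
  have hpt : ∀ x : V,
      (min ((Finset.univ.filter
              (fun i : Fin k => f ((x : Fin n → ZMod 2) + a i) = 0)).card)
           ((Finset.univ.filter
              (fun i : Fin k => f ((x : Fin n → ZMod 2) + a i) = 1)).card) : ℝ)
        = ((k : ℝ) - |S x|) / 2 := by
    intro x
    set P := Finset.univ.filter
        (fun i : Fin k => f ((x : Fin n → ZMod 2) + a i) = 0) with hP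
    set Q := Finset.univ.filter
        (fun i : Fin k => f ((x : Fin n → ZMod 2) + a i) = 1) with hQ
    have hQ' : Q = Finset.univ.filter
        (fun i : Fin k => ¬ f ((x : Fin n → ZMod 2) + a i) = 0) := by
      apply Finset.filter_congr
      intro i _
      rcases he01 i x with ⟨h0, _⟩ | ⟨h1, _⟩
      · simp [h0]
      · simp [h1]
    have hpq : P.card + Q.card = k := by
      rw [hP, hQ']
      rw [Finset.card_filter_add_card_filter_not]
      simp
    have hSx : S x = (P.card : ℝ) - (Q.card : ℝ) := by
      show ∑ i : Fin k, e i x = _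
      have hsplit : ∑ i : Fin k, e i x
          = ∑ i ∈ P, e i x + ∑ i ∈ Q, e i x := by
        rw [hQ', hP]
        exact (Finset.sum_filter_add_sum_filter_not _ _ _).symm
      rw [hsplit]
      have h1 : ∑ i ∈ P, e i x = (P.card : ℝ) := by
        rw [Finset.sum_congr rfl (fun i hi => ?_), Finset.sum_const, nsmul_eq_mul, mul_one]
        rcases he01 i x with ⟨_, h⟩ | ⟨h1, _⟩
        · exact h
        · exfalso
          rw [hP, Finset.mem_filter] at hi
          rw [hi.2] at h1
          exact one_ne_zero h1.symm
      have h2 : ∑ i ∈ Q, e i x = -(Q.card : ℝ) := by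
        rw [Finset.sum_congr rfl (fun i hi => ?_), Finset.sum_const, nsmul_eq_mul, mul_neg_one]
        rcases he01 i x with ⟨h0, _⟩ | ⟨_, h⟩
        · exfalso
          rw [hQ, Finset.mem_filter] at hi
          rw [hi.2] at h0
          exact one_ne_zero h0
        · exact h
      rw [h1, h2]; ring
    have hk' : (P.card : ℝ) + (Q.card : ℝ) = (k : ℝ) := by exact_mod_cast hpq
    rw [hSx]
    rcases le_total (P.card : ℝ) (Q.card : ℝ) with h | h
    · rw [min_eq_left h, abs_of_nonpos (by linarith)]; linarith
    · rw [min_eq_right h, abs_of_nonneg (by linarith)]; linarith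
  -- sum of squares bound
  have hdiag : ∀ i : Fin k, ∑ x : V, e i x * e i x = c := by
    intro i
    have : ∀ x : V, e i x * e i x = 1 := by
      intro x
      rcases he01 i x with ⟨_, h⟩ | ⟨_, h⟩ <;> rw [h] <;> norm_num
    rw [Finset.sum_congr rfl (fun x _ => this x)]
    simp [hc_def]
  have hoff : ∀ i j : Fin k, i ≠ j → |∑ x : V, e i x * e j x| ≤ ε * c := by
    intro i j hij
    rcases lt_or_gt_of_ne hij with h | h
    · exact hcorr i j h
    · have := hcorr j i h
      have hcomm : ∑ x : V, e i x * e j x = ∑ x : V, e j x * e i x := by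
        exact Finset.sum_congr rfl (fun x _ => mul_comm _ _)
      rw [hcomm]; exact this
  have hsq : ∑ x : V, S x ^ 2 ≤ (k:ℝ)^2 * c * (ε + 1/(k:ℝ)) := by
    have hexp : ∑ x : V, S x ^ 2
        = ∑ i : Fin k, ∑ j : Fin k, ∑ x : V, e i x * e j x := by
      have h1 : ∀ x : V, S x ^ 2 = ∑ i : Fin k, ∑ j : Fin k, e i x * e j x := by
        intro x
        rw [hS_def, sq, Finset.sum_mul_sum]
      rw [Finset.sum_congr rfl (fun x _ => h1 x), Finset.sum_comm]
      exact Finset.sum_congr rfl (fun i _ => Finset.sum_comm)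
    rw [hexp]
    have hbound : ∑ i : Fin k, ∑ j : Fin k, ∑ x : V, e i x * e j x
        ≤ ∑ i : Fin k, ∑ j : Fin k, (if i = j then c else ε * c) := by
      refine Finset.sum_le_sum (fun i _ => Finset.sum_le_sum (fun j _ => ?_))
      by_cases hij : i = j
      · subst hij; rw [if_pos rfl, hdiag]
      · rw [if_neg hij]; exact (abs_le.mp (hoff i j hij)).2
    have hval : ∑ i : Fin k, ∑ j : Fin k, (if i = j then c else ε * c)
        = (k:ℝ) * ((k:ℝ) * (ε*c) + (c - ε*c)) := by
      have hrow : ∀ i : Fin k, ∑ j : Fin k, (if i = j then c else ε * c)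
          = (k:ℝ) * (ε*c) + (c - ε*c) := by
        intro i
        have : ∀ j : Fin k, (if i = j then c else ε * c)
            = ε*c + (if i = j then c - ε*c else 0) := by
          intro j; by_cases h : i = j <;> simp [h]
        rw [Finset.sum_congr rfl (fun j _ => this j), Finset.sum_add_distrib,
          Finset.sum_const, Finset.sum_ite_eq]
        simp [mul_comm]
      rw [Finset.sum_congr rfl (fun i _ => hrow i), Finset.sum_const,
        Finset.card_univ, Fintype.card_fin, nsmul_eq_mul]
    calc ∑ i : Fin k, ∑ j : Fin k, ∑ x : V, e i x * e j x
        ≤ (k:ℝ) * ((k:ℝ) * (ε*c) + (c - ε*c)) := hbound.trans_eq hval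
      _ ≤ (k:ℝ)^2 * c * (ε + 1/(k:ℝ)) := by
          have h1 : (k:ℝ)^2 * c * (1/(k:ℝ)) = (k:ℝ) * c := by
            field_simp
          have h2 : (k:ℝ) * (ε*c) ≥ 0 := by positivity
          nlinarith [mul_nonneg (mul_nonneg hkpos.le hε0) hc0]
  -- Cauchy-Schwarz
  have hCS : (∑ x : V, |S x|) ^ 2 ≤ c * ∑ x : V, S x ^ 2 := by
    have h := Finset.sum_mul_sq_le_sq_mul_sq Finset.univ (fun _ : V => (1:ℝ))
      (fun x => |S x|)
    simp only [one_mul, one_pow, sq_abs] at h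
    simpa [hc_def, Finset.sum_const, Finset.card_univ] using h
  have hsum_abs : ∑ x : V, |S x| ≤ (k:ℝ) * c * Real.sqrt (ε + 1/(k:ℝ)) := by
    have hs0 : (0:ℝ) ≤ ε + 1/(k:ℝ) := by positivity
    have hA0 : (0:ℝ) ≤ ∑ x : V, |S x| :=
      Finset.sum_nonneg (fun x _ => abs_nonneg _)
    have hB0 : (0:ℝ) ≤ (k:ℝ) * c * Real.sqrt (ε + 1/(k:ℝ)) := by positivity
    have hsq2 : (∑ x : V, |S x|)^2 ≤ ((k:ℝ) * c * Real.sqrt (ε + 1/(k:ℝ)))^2 := by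
      have hrhs : ((k:ℝ) * c * Real.sqrt (ε + 1/(k:ℝ)))^2
          = (k:ℝ)^2 * c^2 * (ε + 1/(k:ℝ)) := by
        rw [mul_pow, mul_pow, Real.sq_sqrt hs0]
      rw [hrhs]
      calc (∑ x : V, |S x|)^2 ≤ c * ∑ x : V, S x ^ 2 := hCS
        _ ≤ c * ((k:ℝ)^2 * c * (ε + 1/(k:ℝ))) :=
            mul_le_mul_of_nonneg_left hsq hc0
        _ = (k:ℝ)^2 * c^2 * (ε + 1/(k:ℝ)) := by ring
    calc ∑ x : V, |S x| = Real.sqrt ((∑ x : V, |S x|)^2) := (Real.sqrt_sq hA0).symm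
      _ ≤ Real.sqrt (((k:ℝ) * c * Real.sqrt (ε + 1/(k:ℝ)))^2) :=
          Real.sqrt_le_sqrt hsq2
      _ = (k:ℝ) * c * Real.sqrt (ε + 1/(k:ℝ)) := Real.sqrt_sq hB0
  -- conclude
  rw [Finset.sum_congr rfl (fun x _ => hpt x)]
  have hsum : ∑ x : V, ((k:ℝ) - |S x|) / 2
      = ((k:ℝ) * c - ∑ x : V, |S x|) / 2 := by
    rw [sub_div, Finset.sum_div,
      Finset.sum_congr rfl (fun x _ => sub_div (k:ℝ) |S x| 2),
      Finset.sum_sub_distrib, Finset.sum_const, Finset.card_univ, nsmul_eq_mul, hc_def]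
    ring
  rw [hsum]
  have : (k:ℝ) * c / 2 * (1 - Real.sqrt (ε + 1/(k:ℝ)))
      = ((k:ℝ)*c - (k:ℝ)*c*Real.sqrt (ε + 1/(k:ℝ))) / 2 := by ring
  rw [ge_iff_le, this]
  linarith
end
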